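/- With the Nomizu bracket $[(v,A),(w,B)] = (A(w) - B(v), [A,B] + R(v \wedge w))$ on $V \oplus \mathfrak{so}(V)$, where $R : V \times V \to \mathfrak{so}(V)$ is an alternating bilinear map, the Jacobi identity $[[x,y],z] + [[y,z],x] + [[z,x],y] = 0$ holds for all $x, y, z$ if and only if for all $u,v,w \in V$: (i) $R(u,v)w + R(v,w)u + R(w,u)v = 0$ (first Bianchi identity) and (ii) $(A \cdot R)(v,w) := [A, R(v,w)] - R(Av, w) - R(v, Aw) = 0$ for all $(v,A)$ in the algebra — in particular, on the full space $V \oplus \mathfrak{so}(V)$, the Jacobi identity holds iff $R$ satisfies the first Bianchi identity and is $\mathfrak{so}(V)$-invariant. -/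
import Mathlib


open RealInnerProductSpace

/-- With the Nomizu bracket `[(v,A),(w,B)] = (A w - B v, [A,B] + R(v,w))` on
`V ⊕ 𝔰𝔬(V)` (where `𝔰𝔬(V)` is the set of skew-symmetric endomorphisms and
`R : V × V → 𝔰𝔬(V)` is alternating bilinear), the Jacobi identity holds for all
elements if and only if `R` satisfies the first Bianchi identity and is
`𝔰𝔬(V)`-invariant. -/
theorem nomizu_jacobi_iff_bianchi_and_invariant {V : Type*} [NormedAddCommGroup V]
    [InnerProductSpace ℝ V] [FiniteDimensional ℝ V]
    (so : Set (V →ₗ[ℝ] V))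
    (hso : so = {A : V →ₗ[ℝ] V | ∀ v w : V, ⟪A v, w⟫ = -⟪v, A w⟫})
    (R : V →ₗ[ℝ] V →ₗ[ℝ] (V →ₗ[ℝ] V))
    (hRalt : ∀ v : V, R v v = 0) (hRso : ∀ v w : V, R v w ∈ so)
    (bracket : (V × (V →ₗ[ℝ] V)) → (V × (V →ₗ[ℝ] V)) → (V × (V →ₗ[ℝ] V)))
    (hbracket : ∀ x y : V × (V →ₗ[ℝ] V),
      bracket x y = (x.2 y.1 - y.2 x.1, x.2 ∘ₗ y.2 - y.2 ∘ₗ x.2 + R x.1 y.1)) :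
    (∀ x y z : V × (V →ₗ[ℝ] V), x.2 ∈ so → y.2 ∈ so → z.2 ∈ so →
        bracket (bracket x y) z + bracket (bracket y z) x + bracket (bracket z x) y = 0)
      ↔
    ((∀ u v w : V, R u v w + R v w u + R w u v = 0) ∧
      (∀ A ∈ so, ∀ v w : V,
        A ∘ₗ R v w - R v w ∘ₗ A = R (A v) w + R v (A w))) := by
  have h0 : (0 : V →ₗ[ℝ] V) ∈ so := by rw [hso]; intro v w; simp
  have hR' : ∀ v w : V, R w v = - R v w := by
    intro v w
    have h := hRalt (v + w)
    simp only [map_add, LinearMap.add_apply, hRalt] at h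
    linear_combination (norm := abel) h
  constructor
  · intro hJ
    constructor
    · intro u v w
      have h := congrArg Prod.fst (hJ (u, 0) (v, 0) (w, 0) h0 h0 h0)
      simp only [hbracket] at h
      simp at h
      exact h
    · intro A hA v w
      have h := congrArg Prod.snd (hJ (0, A) (v, 0) (w, 0) hA h0 h0)
      simp only [hbracket] at h
      simp at h
      rw [hR' v (A w)] at h
      linear_combination (norm := abel) -h
  · rintro ⟨hB, hI⟩ ⟨u, A⟩ ⟨v, B⟩ ⟨w, C⟩ hA hB' hC
    simp only [hbracket]
    refine Prod.ext ?_ ?_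
    · simp only [Prod.fst_add, Prod.fst_zero]
      simp [map_sub, LinearMap.sub_apply, LinearMap.add_apply, LinearMap.comp_apply]
      linear_combination (norm := abel) hB u v w
    · simp only [Prod.snd_add, Prod.snd_zero]
      simp [map_sub, LinearMap.comp_sub, LinearMap.sub_comp, LinearMap.add_comp, LinearMap.comp_add]
      simp only [LinearMap.comp_assoc]
      linear_combination (norm := abel) -(hI C hC u v) - (hI A hA v w) - (hI B hB' w u)
        - hR' w (B u) - hR' u (C v) - hR' v (A w)
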